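/- Let κ be a regular uncountable cardinal and assume principle C⁻(κ). Then for every family 𝓐 of infinite subsets of ℕ with |𝓐| = κ, either (a) there is a centered subfamily 𝓑 ⊆ 𝓐 of cardinality κ, or (b) there exist k < ω and subfamilies 𝓑_0, …, 𝓑_{k−1} of 𝓐, each of cardinality κ, such that ⋂_{i<k} (⋃𝓑_i) is finite. -/

import Mathlib

open Cardinal

/-- `C` is closed and unbounded (club) in the ordinal `o`. -/
def ClubIn (o : Ordinal) (C : Set Ordinal) : Prop :=
  C ⊆ Set.Iio o ∧ (∀ α < o, ∃ β ∈ C, α < β) ∧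
    ∀ α < o, 0 < α → (∀ β < α, ∃ γ ∈ C, β < γ ∧ γ < α) → α ∈ C

/-- `S` is a stationary subset of the ordinal `o`: it meets every club subset of `o`. -/
def StationaryIn (o : Ordinal) (S : Set Ordinal) : Prop :=
  S ⊆ Set.Iio o ∧ ∀ C, ClubIn o C → (S ∩ C).Nonempty

/-- `S` is a cofinal (unbounded) subset of the ordinal `o`. -/
def CofinalIn (o : Ordinal) (S : Set Ordinal) : Prop :=
  S ⊆ Set.Iio o ∧ ∀ α < o, ∃ β ∈ S, α < β

/-- For a matrix `A` of subsets of `ℕ`, a finite sequence `t ∈ ω^{<ω}` and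
`s : {0,…,|t|-1} → Ordinal`, this is `A[s,t] = ⋂_{i<|t|} A(s i, t i)`. -/
def MatInt (A : Ordinal → ℕ → Set ℕ) (t : List ℕ) (s : Fin t.length → Ordinal) : Set ℕ :=
  ⋂ i, A (s i) (t.get i)

/-- Principle C⁻(κ). -/
def PrincipleCminus (κ : Cardinal) : Prop :=
  ∀ (T : Set (List ℕ)) (A : Ordinal → ℕ → Set ℕ),
    (∃ S : Set Ordinal, CofinalIn κ.ord S ∧
      ∀ t ∈ T, ∀ s : Fin t.length → Ordinal, Function.Injective s →
        (∀ i, s i ∈ S) → (MatInt A t s).Nonempty) ∨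
    (∃ t ∈ T, ∃ D : Fin t.length → Set Ordinal,
      (∀ i, CofinalIn κ.ord (D i)) ∧
      ∀ s : Fin t.length → Ordinal, Function.Injective s →
        (∀ i, s i ∈ D i) → MatInt A t s = ∅)

/-- A family of subsets of `ℕ` is centered if every finite subfamily has
nonempty intersection. -/
def Centered (L : Set (Set ℕ)) : Prop :=
  ∀ F : Finset (Set ℕ), ↑F ⊆ L → (⋂₀ (F : Set (Set ℕ))).Nonempty

/-!
Enumerate `𝓐` injectively as `e α` (`α < κ`) and apply C⁻(κ) to the matrix `e α ∩ [n, ∞)`,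
with `T` the set of all finite sequences. In the first alternative, sequences of zeros show that
`e '' S` is centered. In the second, shrink the cofinal sets `D i` to pairwise disjoint cofinal
sets `W i`: starting from each closure point `δ` of the block map, pick `δ < d₀ < d₁ < ⋯` with
`dᵢ ∈ D i`; blocks starting at distinct closure points do not interleave. A point `x ≥ max t`
in every `⋃ e '' W i` would then give an injective `s` with `x ∈ A[s,t] = ∅`.
-/

universe u

open Set Function

theorem exists_injOn_mapsTo_Iio_ord {X : Type u} [Nonempty X] {s : Set X} {κ : Cardinal.{u}}
    (h : #s = κ) : ∃ e : Ordinal.{u} → X, InjOn e (Iio κ.ord) ∧ MapsTo e (Iio κ.ord) s := by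
  obtain ⟨φ⟩ : Nonempty (Iio κ.ord ≃ s) := by
    rw [← Cardinal.lift_mk_eq', mk_Iio_ordinal, card_ord, h]
    simp
  refine ⟨fun α => if hα : α < κ.ord then φ ⟨α, hα⟩ else Classical.arbitrary X, ?_, ?_⟩
  · intro α hα β hβ heq
    simp only [dif_pos (mem_Iio.1 hα), dif_pos (mem_Iio.1 hβ)] at heq
    exact congrArg Subtype.val (φ.injective (Subtype.ext heq))
  · intro α hα
    simp [dif_pos (mem_Iio.1 hα)]

theorem le_mk_image_of_cofinalIn {κ : Cardinal.{u}} (hreg : κ.IsRegular) {S : Set Ordinal.{u}}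
    (hS : CofinalIn κ.ord S) {X : Type u} {e : Ordinal.{u} → X} (he : InjOn e S) :
    κ ≤ #(e '' S) := by
  by_contra! hlt
  have hS_lt : #S < (Ordinal.lift.{u + 1} κ.ord).cof := by
    rw [← Ordinal.lift_cof, hreg.cof_ord, ← Cardinal.lift_id'.{u, u + 1} #S,
      ← mk_image_eq_of_injOn_lift e S he]
    exact lift_strictMono hlt
  obtain ⟨β, hβS, hβ⟩ := hS.2 _ (Ordinal.sSup_lt_of_lt_cof hS_lt hS.1)
  exact hβ.not_ge (le_csSup ⟨κ.ord, fun _ h => (hS.1 h).le⟩ hβS)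

def closurePoints (o : Ordinal.{u}) (g : Ordinal.{u} → Ordinal.{u}) : Set Ordinal.{u} :=
  {δ | δ < o ∧ ∀ γ < δ, g γ < δ}

theorem cofinalIn_closurePoints {κ : Cardinal.{u}} (hreg : κ.IsRegular) (hunc : ℵ₀ < κ)
    {g : Ordinal.{u} → Ordinal.{u}} (hg : ∀ β < κ.ord, g β < κ.ord) :
    CofinalIn κ.ord (closurePoints κ.ord g) := by
  let F : Ordinal.{u} → Ordinal.{u} := fun β => ⨆ γ : Iio β, g γ + 1
  have hF : ∀ β < κ.ord, F β < κ.ord := by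
    intro β hβ
    refine Ordinal.lift_iSup_add_one_lt_of_lt_cof ?_ fun γ => hg γ (γ.2.trans hβ)
    rw [mk_Iio_ordinal, ← Ordinal.lift_cof, hreg.cof_ord, Cardinal.lift_id'.{u, u + 1},
      Cardinal.lift_lt]
    exact lt_ord.1 hβ
  refine ⟨fun δ hδ => hδ.1, fun α hα => ⟨Ordinal.nfp F (α + 1), ⟨?_, fun γ hγ => ?_⟩,
    (lt_add_one α).trans_le (Ordinal.le_nfp F _)⟩⟩
  · exact nfp_lt_ord_of_isRegular hreg hunc.ne' hF
      ((isSuccLimit_ord hreg.aleph0_le).add_one_lt hα)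
  obtain ⟨n, hn⟩ := Ordinal.lt_nfp_iff.1 hγ
  calc g γ < F (F^[n] (α + 1)) :=
        (lt_add_one (g γ)).trans_le (Ordinal.le_iSup (fun γ' : Iio _ => g γ' + 1) ⟨γ, hn⟩)
    _ = F^[n + 1] (α + 1) := (iterate_succ_apply' F n _).symm
    _ ≤ Ordinal.nfp F (α + 1) := Ordinal.iterate_le_nfp F _ _

theorem Pairwise.injective_of_forall_mem {ι α : Type*} {W : ι → Set α}
    (hW : Pairwise (Disjoint on W)) {s : ι → α} (hs : ∀ i, s i ∈ W i) : Injective s :=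
  fun i j hij => by_contra fun hne => disjoint_left.1 (hW hne) (hs i) (hij ▸ hs j)

theorem exists_pairwise_disjoint_cofinalIn_nat {κ : Cardinal.{u}} (hreg : κ.IsRegular)
    (hunc : ℵ₀ < κ) {D : ℕ → Set Ordinal.{u}} (hD : ∀ n, CofinalIn κ.ord (D n)) :
    ∃ W : ℕ → Set Ordinal.{u}, (∀ n, W n ⊆ D n ∧ CofinalIn κ.ord (W n)) ∧
      Pairwise (Disjoint on W) := by
  choose! next hnext using fun n β (hβ : β < κ.ord) => (hD n).2 β hβ
  let c : Ordinal.{u} → ℕ → Ordinal.{u} := fun δ n => Nat.rec δ next n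
  have hc_lt : ∀ δ < κ.ord, ∀ n, c δ n < κ.ord := by
    intro δ hδ n
    induction n with
    | zero => exact hδ
    | succ n ih => exact (hD n).1 (hnext n _ ih).1
  have hc_mono : ∀ δ < κ.ord, StrictMono (c δ) := fun δ hδ =>
    strictMono_nat_of_lt_succ fun n => (hnext n _ (hc_lt δ hδ n)).2
  let g : Ordinal.{u} → Ordinal.{u} := fun δ => ⨆ n, c δ n
  have hg : ∀ δ < κ.ord, g δ < κ.ord := fun δ hδ =>
    Ordinal.lift_iSup_lt_of_lt_cof (by simpa [hreg.cof_ord] using hunc) (hc_lt δ hδ)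
  set Δ := closurePoints κ.ord g
  have hsep : ∀ δ ∈ Δ, ∀ δ' ∈ Δ, δ < δ' → ∀ m n, c δ m < c δ' n :=
    fun δ _ δ' hδ' hlt m n => calc
      c δ m ≤ g δ := Ordinal.le_iSup (c δ) m
      _ < δ' := hδ'.2 δ hlt
      _ ≤ c δ' n := (hc_mono δ' hδ'.1).monotone (Nat.zero_le n)
  refine ⟨fun n => (c · (n + 1)) '' Δ, fun n => ⟨?_, ?_, fun α hα => ?_⟩, fun m n hmn => ?_⟩
  · rintro _ ⟨δ, hδ, rfl⟩
    exact (hnext n _ (hc_lt δ hδ.1 n)).1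
  · rintro _ ⟨δ, hδ, rfl⟩
    exact hc_lt δ hδ.1 (n + 1)
  · obtain ⟨δ, hδ, hαδ⟩ := (cofinalIn_closurePoints hreg hunc hg).2 α hα
    exact ⟨_, ⟨δ, hδ, rfl⟩, hαδ.trans (hc_mono δ hδ.1 n.succ_pos)⟩
  · refine disjoint_left.2 ?_
    rintro _ ⟨δ, hδ, rfl⟩ ⟨δ', hδ', heq⟩
    rcases lt_trichotomy δ δ' with h | rfl | h
    · exact (hsep δ hδ δ' hδ' h (m + 1) (n + 1)).ne heq.symm
    · exact hmn (Nat.succ_injective ((hc_mono δ hδ.1).injective heq.symm))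
    · exact (hsep δ' hδ' δ hδ h (n + 1) (m + 1)).ne heq

theorem exists_pairwise_disjoint_cofinalIn {κ : Cardinal.{u}} (hreg : κ.IsRegular)
    (hunc : ℵ₀ < κ) {ι : Type*} [Countable ι] {D : ι → Set Ordinal.{u}}
    (hD : ∀ i, CofinalIn κ.ord (D i)) :
    ∃ W : ι → Set Ordinal.{u}, (∀ i, W i ⊆ D i ∧ CofinalIn κ.ord (W i)) ∧
      Pairwise (Disjoint on W) := by
  cases isEmpty_or_nonempty ι
  · exact ⟨D, isEmptyElim, fun i => isEmptyElim i⟩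
  obtain ⟨f, hf⟩ := exists_surjective_nat ι
  obtain ⟨W, hWD, hW⟩ := exists_pairwise_disjoint_cofinalIn_nat hreg hunc fun n => hD (f n)
  refine ⟨W ∘ surjInv hf, fun i => ?_, hW.comp_of_injective (injective_surjInv hf)⟩
  simpa only [comp_apply, surjInv_eq hf i] using hWD (surjInv hf i)

def tailMatrix (e : Ordinal → Set ℕ) (α : Ordinal) (n : ℕ) : Set ℕ :=
  e α ∩ Ici n

theorem mem_matInt_tailMatrix {e : Ordinal → Set ℕ} {t : List ℕ} {s : Fin t.length → Ordinal}
    {x : ℕ} : x ∈ MatInt (tailMatrix e) t s ↔ ∀ i, x ∈ e (s i) ∧ t.get i ≤ x := by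
  simp [MatInt, tailMatrix]

theorem centered_image_of_forall_matInt_nonempty {e : Ordinal → Set ℕ} {S : Set Ordinal}
    (hS : ∀ (t : List ℕ) (s : Fin t.length → Ordinal), Injective s → (∀ i, s i ∈ S) →
      (MatInt (tailMatrix e) t s).Nonempty) :
    Centered (e '' S) := by
  classical
  intro F hF
  obtain ⟨G, hGS, rfl⟩ := Finset.subset_set_image_iff.1 hF
  have hlen : (List.replicate G.card 0).length = G.card := List.length_replicate
  let s : Fin (List.replicate G.card 0).length → Ordinal := fun i => G.equivFin.symm (i.cast hlen)
  obtain ⟨x, hx⟩ := hS _ s (Subtype.val_injective.comp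
    (G.equivFin.symm.injective.comp (Fin.cast_injective hlen))) fun i => hGS (Subtype.prop _)
  refine ⟨x, ?_⟩
  simp only [Finset.coe_image, sInter_image, mem_iInter]
  intro α hα
  simpa [s] using (mem_matInt_tailMatrix.1 hx ((G.equivFin ⟨α, hα⟩).cast hlen.symm)).1

theorem finite_iInter_sUnion_image_of_forall_matInt_eq_empty {e : Ordinal → Set ℕ} {t : List ℕ}
    {W : Fin t.length → Set Ordinal}
    (hW : ∀ s : Fin t.length → Ordinal, (∀ i, s i ∈ W i) → MatInt (tailMatrix e) t s = ∅) :
    (⋂ i, ⋃₀ (e '' W i)).Finite := by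
  refine (finite_iUnion fun i => finite_Iio (t.get i)).subset fun x hx => ?_
  by_contra hlarge
  simp only [mem_iUnion, mem_Iio, not_exists, not_lt] at hlarge
  simp only [mem_iInter, sUnion_image, mem_iUnion] at hx
  choose s hsW hxs using hx
  have hxmem : x ∈ MatInt (tailMatrix e) t s := mem_matInt_tailMatrix.2 fun i => ⟨hxs i, hlarge i⟩
  rw [hW s hsW] at hxmem
  exact hxmem

theorem statement_14_general (κ : Cardinal.{0}) (hreg : κ.IsRegular) (hunc : ℵ₀ < κ)
    (hC : PrincipleCminus κ)
    (𝓐 : Set (Set ℕ)) (hcard : #𝓐 = κ) :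
    (∃ 𝓑 ⊆ 𝓐, #𝓑 = κ ∧ Centered 𝓑) ∨
    (∃ k : ℕ, ∃ 𝓑 : Fin k → Set (Set ℕ), (∀ i, 𝓑 i ⊆ 𝓐 ∧ #(𝓑 i) = κ) ∧
        (⋂ i, ⋃₀ 𝓑 i).Finite) := by
  obtain ⟨e, he_inj, he_maps⟩ := exists_injOn_mapsTo_Iio_ord hcard
  have hsub : ∀ {S}, CofinalIn κ.ord S → e '' S ⊆ 𝓐 := fun hS =>
    (he_maps.mono_left hS.1).image_subset
  have hmk : ∀ {S}, CofinalIn κ.ord S → #(e '' S) = κ := fun hS =>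
    le_antisymm (hcard ▸ mk_le_mk_of_subset (hsub hS))
      (le_mk_image_of_cofinalIn hreg hS (he_inj.mono hS.1))
  rcases hC univ (tailMatrix e) with ⟨S, hS, hne⟩ | ⟨t, -, D, hD, hempty⟩
  · exact .inl ⟨e '' S, hsub hS, hmk hS,
      centered_image_of_forall_matInt_nonempty fun t => hne t (mem_univ t)⟩
  · obtain ⟨W, hWD, hW⟩ := exists_pairwise_disjoint_cofinalIn hreg hunc hD
    refine .inr ⟨t.length, fun i => e '' W i, fun i => ⟨hsub (hWD i).2, hmk (hWD i).2⟩, ?_⟩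
    exact finite_iInter_sUnion_image_of_forall_matInt_eq_empty fun s hs =>
      hempty s (hW.injective_of_forall_mem hs) fun i => (hWD i).1 (hs i)

/-- Under C⁻(κ), any κ-sized family 𝓐 of infinite subsets of ℕ either has a κ-sized
centered subfamily, or there are `k < ω` and κ-sized subfamilies 𝓑₀, …, 𝓑_{k-1}
with `⋂_{i<k} ⋃ 𝓑ᵢ` finite. -/
theorem statement_14 (κ : Cardinal.{0}) (hreg : κ.IsRegular) (hunc : ℵ₀ < κ)
    (hC : PrincipleCminus κ)
    (𝓐 : Set (Set ℕ)) (hinf : ∀ A ∈ 𝓐, A.Infinite) (hcard : #𝓐 = κ) :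
    (∃ 𝓑 ⊆ 𝓐, #𝓑 = κ ∧ Centered 𝓑) ∨
    (∃ k : ℕ, ∃ 𝓑 : Fin k → Set (Set ℕ), (∀ i, 𝓑 i ⊆ 𝓐 ∧ #(𝓑 i) = κ) ∧
        (⋂ i, ⋃₀ 𝓑 i).Finite) :=
  statement_14_general κ hreg hunc hC 𝓐 hcard
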